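/- arXiv:1710.05133 — 5 statements merged into one kernel-verified Lean document; each statement's English description precedes it below -/
import Mathlib

section
/- Let A : ℝⁿ → ℝᵐ be a nonzero linear map, and let σ_min denote the smallest nonzero singular value of A. Fix a point b in the range of A and let S = {x ∈ ℝⁿ : A x = b}. Then for every x ∈ ℝⁿ, ‖A x − b‖ ≥ σ_min · dist(x, S), where dist(x, S) = inf_{y ∈ S} ‖x − y‖. -/
/-!
Write `x - x₀ = k + p` with `k ∈ ker A` and `p ∈ (ker A)ᗮ`, where `A x₀ = b`. Then `A p = A x - b`,
so `x - p` solves `A y = b`, whence `dist(x, S) ≤ ‖p‖`; and `σmin ‖p‖ ≤ ‖A p‖` by the definition of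
`σmin` as an infimum over `(ker A)ᗮ`.
-/

open Metric

section

variable {E F : Type*} [NormedAddCommGroup E] [NormedAddCommGroup F] (f : E → F) (s : Set E)

lemma sInf_norm_div_norm_mul_le {p : E} (hp : p ∈ s) :
    sInf {c : ℝ | ∃ x : E, x ≠ 0 ∧ x ∈ s ∧ c = ‖f x‖ / ‖x‖} * ‖p‖ ≤ ‖f p‖ := by
  rcases eq_or_ne p 0 with rfl | hp₀
  · simp only [norm_zero, mul_zero, norm_nonneg]
  have hbdd : BddBelow {c : ℝ | ∃ x : E, x ≠ 0 ∧ x ∈ s ∧ c = ‖f x‖ / ‖x‖} :=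
    ⟨0, fun _ ⟨_, _, _, hc⟩ ↦ hc ▸ by positivity⟩
  exact (le_div_iff₀ (norm_pos_iff.mpr hp₀)).mp (csInf_le hbdd ⟨p, hp₀, hp, rfl⟩)

lemma sInf_norm_div_norm_nonneg : 0 ≤ sInf {c : ℝ | ∃ x : E, x ≠ 0 ∧ x ∈ s ∧ c = ‖f x‖ / ‖x‖} :=
  Real.sInf_nonneg fun _ ⟨_, _, _, hc⟩ ↦ hc ▸ by positivity

end

section

variable {𝕜 E F : Type*} [RCLike 𝕜] [NormedAddCommGroup E] [InnerProductSpace 𝕜 E]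
  [CompleteSpace E] [NormedAddCommGroup F] [NormedSpace 𝕜 F]

lemma ContinuousLinearMap.mul_infDist_preimage_le (A : E →L[𝕜] F) {σ : ℝ} (hσ : 0 ≤ σ)
    (hA : ∀ p ∈ (LinearMap.ker (A : E →ₗ[𝕜] F))ᗮ, σ * ‖p‖ ≤ ‖A p‖) (x x₀ : E) :
    σ * infDist x {y | A y = A x₀} ≤ ‖A x - A x₀‖ := by
  set K := LinearMap.ker (A : E →ₗ[𝕜] F)
  have : CompleteSpace K := A.isClosed_ker.completeSpace_coe
  set p := (x - x₀) - K.starProjection (x - x₀) with hp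
  have hAp : A p = A x - A x₀ := by
    have hk : A (K.starProjection (x - x₀)) = 0 := K.starProjection_apply_mem (x - x₀)
    rw [hp, map_sub, hk, sub_zero, map_sub]
  have hdist : infDist x {y | A y = A x₀} ≤ ‖p‖ := by
    have hmem : x - p ∈ {y | A y = A x₀} := by
      rw [Set.mem_ofPred_eq, map_sub, hAp, sub_sub_cancel]
    simpa [dist_eq_norm] using infDist_le_dist_of_mem (x := x) hmem
  calc σ * infDist x {y | A y = A x₀} ≤ σ * ‖p‖ := mul_le_mul_of_nonneg_left hdist hσ
    _ ≤ ‖A p‖ := hA p (K.sub_starProjection_mem_orthogonal (x - x₀))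
    _ = ‖A x - A x₀‖ := by rw [hAp]

end

theorem lower_bound_smallest_singular_value_general {n m : ℕ}
    (A : EuclideanSpace ℝ (Fin n) →L[ℝ] EuclideanSpace ℝ (Fin m))
    (σmin : ℝ)
    (hσmin : σmin = sInf {c : ℝ | ∃ x : EuclideanSpace ℝ (Fin n),
      x ≠ 0 ∧ x ∈ (LinearMap.ker (A : EuclideanSpace ℝ (Fin n) →ₗ[ℝ] EuclideanSpace ℝ (Fin m)))ᗮ ∧ c = ‖A x‖ / ‖x‖})
    (b : EuclideanSpace ℝ (Fin m)) (hb : b ∈ Set.range A)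
    (S : Set (EuclideanSpace ℝ (Fin n))) (hS : S = {x | A x = b}) :
    ∀ x : EuclideanSpace ℝ (Fin n), σmin * Metric.infDist x S ≤ ‖A x - b‖ := by
  intro x
  obtain ⟨x₀, rfl⟩ := hb
  subst hσmin hS
  exact A.mul_infDist_preimage_le (sInf_norm_div_norm_nonneg A _)
    (fun p hp ↦ sInf_norm_div_norm_mul_le A _ hp) x x₀

/-- For a nonzero linear map `A : ℝⁿ → ℝᵐ` with smallest nonzero singular
value `σmin`, a point `b` in the range of `A`, and `S = {x | A x = b}`, one has
`‖A x − b‖ ≥ σmin · dist(x, S)` for every `x`. -/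
theorem lower_bound_smallest_singular_value {n m : ℕ}
    (A : EuclideanSpace ℝ (Fin n) →L[ℝ] EuclideanSpace ℝ (Fin m)) (hA : A ≠ 0)
    (σmin : ℝ)
    (hσmin : σmin = sInf {c : ℝ | ∃ x : EuclideanSpace ℝ (Fin n),
      x ≠ 0 ∧ x ∈ (LinearMap.ker (A : EuclideanSpace ℝ (Fin n) →ₗ[ℝ] EuclideanSpace ℝ (Fin m)))ᗮ ∧ c = ‖A x‖ / ‖x‖})
    (b : EuclideanSpace ℝ (Fin m)) (hb : b ∈ Set.range A)
    (S : Set (EuclideanSpace ℝ (Fin n))) (hS : S = {x | A x = b}) :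
    ∀ x : EuclideanSpace ℝ (Fin n), σmin * Metric.infDist x S ≤ ‖A x - b‖ :=
  lower_bound_smallest_singular_value_general A σmin hσmin b hb S hS
end

section
/- Let A : ℝⁿ → ℝᵐ be a nonzero linear map with smallest nonzero singular value σ_min. Let g : ℝᵐ → ℝ be differentiable and μ-strongly convex (μ > 0) with minimizer u*, and suppose u* lies in the range of A. Define f(x) = g(A x), f* = g(u*), and S = {x ∈ ℝⁿ : A x = u*}. Then S is exactly the set of minimizers of f, and for all x ∈ ℝⁿ, f(x) − f* ≥ (μ σ_min² / 2) · dist(x, S)² (the quadratic growth condition). -/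
/-!
Strong convexity at the minimizer `u*`, where the gradient vanishes, gives
`g u - g u* ≥ μ/2 ‖u - u*‖²`. The fibre `{x | A x = u*}` is a translate of `ker A`, so the
distance from `x` to it is attained along `(ker A)ᗮ`, where `‖A p‖ ≥ σmin ‖p‖`; hence
`σmin · dist(x, S) ≤ ‖A x - u*‖`, and the two bounds combine.
-/

open RealInnerProductSpace

theorem sq_norm_sub_le_of_strongConvex_of_isMinimizer {E : Type*} [NormedAddCommGroup E]
    [InnerProductSpace ℝ E] [CompleteSpace E] {g : E → ℝ} {μ : ℝ}
    (hsc : ∀ y z : E, g z + ⟪gradient g z, y - z⟫ + μ / 2 * ‖y - z‖ ^ 2 ≤ g y)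
    {ustar : E} (hustar : ∀ y, g ustar ≤ g y) (u : E) :
    μ / 2 * ‖u - ustar‖ ^ 2 ≤ g u - g ustar := by
  have hgrad : gradient g ustar = 0 := by
    have hmin : IsLocalMin g ustar := Filter.Eventually.of_forall hustar
    simp [gradient, hmin.fderiv_eq_zero]
  have := hsc u ustar
  rw [hgrad, inner_zero_left] at this
  linarith

theorem setOf_isMinimizer_comp_eq {X E : Type*} [NormedAddCommGroup E] (A : X → E)
    {g : E → ℝ} {μ : ℝ} (hμ : 0 < μ) {ustar : E} (hustar : ∀ y, g ustar ≤ g y)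
    (hgrowth : ∀ u, μ / 2 * ‖u - ustar‖ ^ 2 ≤ g u - g ustar) {x₀ : X} (hx₀ : A x₀ = ustar) :
    {x | ∀ y, g (A x) ≤ g (A y)} = {x | A x = ustar} := by
  ext x
  simp only [Set.mem_ofPred_eq]
  constructor
  · intro hx
    have hle : g (A x) ≤ g ustar := hx₀ ▸ hx x₀
    have hsq : ‖A x - ustar‖ ^ 2 ≤ 0 := by nlinarith [hgrowth (A x)]
    simpa [sub_eq_zero] using hsq
  · intro hx y
    rw [hx]
    exact hustar _

namespace ContinuousLinearMap

variable {E F : Type*} [NormedAddCommGroup E] [InnerProductSpace ℝ E]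
  [NormedAddCommGroup F] [NormedSpace ℝ F]

/-- Equal to `0` when `A = 0`, since then the defining set is empty. -/
noncomputable def minNonzeroSingularValue (A : E →L[ℝ] F) : ℝ :=
  sInf {c : ℝ | ∃ x : E, x ≠ 0 ∧ x ∈ (LinearMap.ker (A : E →ₗ[ℝ] F))ᗮ ∧ c = ‖A x‖ / ‖x‖}

theorem minNonzeroSingularValue_nonneg (A : E →L[ℝ] F) : 0 ≤ A.minNonzeroSingularValue :=
  Real.sInf_nonneg fun _ ⟨_, _, _, hc⟩ => hc ▸ by positivity

theorem minNonzeroSingularValue_mul_norm_le (A : E →L[ℝ] F) {p : E}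
    (hp : p ∈ (LinearMap.ker (A : E →ₗ[ℝ] F))ᗮ) :
    A.minNonzeroSingularValue * ‖p‖ ≤ ‖A p‖ := by
  rcases eq_or_ne p 0 with rfl | hp₀
  · simp
  have hbdd : BddBelow {c : ℝ | ∃ x : E, x ≠ 0 ∧ x ∈ (LinearMap.ker (A : E →ₗ[ℝ] F))ᗮ ∧
      c = ‖A x‖ / ‖x‖} :=
    ⟨0, fun _ ⟨_, _, _, hc⟩ => hc ▸ by positivity⟩
  have hσ : A.minNonzeroSingularValue ≤ ‖A p‖ / ‖p‖ := csInf_le hbdd ⟨p, hp₀, hp, rfl⟩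
  exact (le_div_iff₀ (norm_pos_iff.mpr hp₀)).mp hσ

variable [FiniteDimensional ℝ E]

theorem exists_mem_ker_orthogonal_infDist_fiber_le (A : E →L[ℝ] F) {x₀ : E} (x : E) :
    ∃ p ∈ (LinearMap.ker (A : E →ₗ[ℝ] F))ᗮ,
      A p = A x - A x₀ ∧ Metric.infDist x {y | A y = A x₀} ≤ ‖p‖ := by
  obtain ⟨k, hk, p, hp, hkp⟩ :=
    (LinearMap.ker (A : E →ₗ[ℝ] F)).exists_add_mem_mem_orthogonal (x - x₀)
  have hAk : A k = 0 := hk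
  have hx : x - (x₀ + k) = p := by linear_combination (norm := module) hkp
  refine ⟨p, hp, ?_, ?_⟩
  · rw [← map_sub, hkp, map_add, hAk, zero_add]
  · refine (Metric.infDist_le_dist_of_mem (x := x) (y := x₀ + k) ?_).trans_eq ?_
    · simp [hAk]
    · rw [dist_eq_norm, hx]

/-- A Hoffman-type error bound for the fibres of `A`. -/
theorem minNonzeroSingularValue_mul_infDist_fiber_le (A : E →L[ℝ] F) {u : F}
    (hu : u ∈ Set.range A) (x : E) :
    A.minNonzeroSingularValue * Metric.infDist x {y | A y = u} ≤ ‖A x - u‖ := by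
  obtain ⟨x₀, rfl⟩ := hu
  obtain ⟨p, hp, hAp, hdist⟩ := A.exists_mem_ker_orthogonal_infDist_fiber_le (x₀ := x₀) x
  calc A.minNonzeroSingularValue * Metric.infDist x {y | A y = A x₀}
      ≤ A.minNonzeroSingularValue * ‖p‖ :=
        mul_le_mul_of_nonneg_left hdist A.minNonzeroSingularValue_nonneg
    _ ≤ ‖A p‖ := A.minNonzeroSingularValue_mul_norm_le hp
    _ = ‖A x - A x₀‖ := by rw [hAp]

end ContinuousLinearMap

theorem quadratic_growth_of_strongly_convex_composition_general {n m : ℕ}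
    (A : EuclideanSpace ℝ (Fin n) →L[ℝ] EuclideanSpace ℝ (Fin m))
    (σmin : ℝ)
    (hσmin : σmin = sInf {c : ℝ | ∃ x : EuclideanSpace ℝ (Fin n),
      x ≠ 0 ∧ x ∈ (LinearMap.ker (A : EuclideanSpace ℝ (Fin n) →ₗ[ℝ] EuclideanSpace ℝ (Fin m)))ᗮ ∧ c = ‖A x‖ / ‖x‖})
    (g : EuclideanSpace ℝ (Fin m) → ℝ)
    (μ : ℝ) (hμ : 0 < μ)
    (hsc : ∀ y z : EuclideanSpace ℝ (Fin m),
      g z + ⟪gradient g z, y - z⟫ + μ / 2 * ‖y - z‖ ^ 2 ≤ g y)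
    (ustar : EuclideanSpace ℝ (Fin m))
    (hustar : ∀ y : EuclideanSpace ℝ (Fin m), g ustar ≤ g y)
    (hrange : ustar ∈ Set.range A)
    (f : EuclideanSpace ℝ (Fin n) → ℝ) (hf : f = fun x => g (A x))
    (fstar : ℝ) (hfstar : fstar = g ustar)
    (S : Set (EuclideanSpace ℝ (Fin n))) (hS : S = {x | A x = ustar}) :
    S = {x | ∀ y : EuclideanSpace ℝ (Fin n), f x ≤ f y} ∧
    ∀ x : EuclideanSpace ℝ (Fin n),
      μ * σmin ^ 2 / 2 * Metric.infDist x S ^ 2 ≤ f x - fstar := by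
  change σmin = A.minNonzeroSingularValue at hσmin
  subst hσmin hf hfstar hS
  have hgrowth := sq_norm_sub_le_of_strongConvex_of_isMinimizer hsc hustar
  obtain ⟨x₀, hx₀⟩ := hrange
  refine ⟨(setOf_isMinimizer_comp_eq A hμ hustar hgrowth hx₀).symm, fun x => ?_⟩
  have hbound := A.minNonzeroSingularValue_mul_infDist_fiber_le ⟨x₀, hx₀⟩ x
  have hnonneg : 0 ≤ A.minNonzeroSingularValue * Metric.infDist x {y | A y = ustar} :=
    mul_nonneg A.minNonzeroSingularValue_nonneg Metric.infDist_nonneg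
  calc μ * A.minNonzeroSingularValue ^ 2 / 2 * Metric.infDist x {y | A y = ustar} ^ 2
      = μ / 2 * (A.minNonzeroSingularValue * Metric.infDist x {y | A y = ustar}) ^ 2 := by ring
    _ ≤ μ / 2 * ‖A x - ustar‖ ^ 2 := by gcongr
    _ ≤ g (A x) - g ustar := hgrowth (A x)

/-- If `g` is differentiable and `μ`-strongly convex with minimizer `u*` in the
range of the nonzero linear map `A`, then `f(x) = g(A x)` has minimizer set
`S = {x | A x = u*}` and satisfies the quadratic growth condition
`f(x) − f* ≥ (μ σmin² / 2) dist(x, S)²`. -/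
theorem quadratic_growth_of_strongly_convex_composition {n m : ℕ}
    (A : EuclideanSpace ℝ (Fin n) →L[ℝ] EuclideanSpace ℝ (Fin m)) (hA : A ≠ 0)
    (σmin : ℝ)
    (hσmin : σmin = sInf {c : ℝ | ∃ x : EuclideanSpace ℝ (Fin n),
      x ≠ 0 ∧ x ∈ (LinearMap.ker (A : EuclideanSpace ℝ (Fin n) →ₗ[ℝ] EuclideanSpace ℝ (Fin m)))ᗮ ∧ c = ‖A x‖ / ‖x‖})
    (g : EuclideanSpace ℝ (Fin m) → ℝ) (hg : Differentiable ℝ g)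
    (μ : ℝ) (hμ : 0 < μ)
    (hsc : ∀ y z : EuclideanSpace ℝ (Fin m),
      g z + ⟪gradient g z, y - z⟫ + μ / 2 * ‖y - z‖ ^ 2 ≤ g y)
    (ustar : EuclideanSpace ℝ (Fin m))
    (hustar : ∀ y : EuclideanSpace ℝ (Fin m), g ustar ≤ g y)
    (hrange : ustar ∈ Set.range A)
    (f : EuclideanSpace ℝ (Fin n) → ℝ) (hf : f = fun x => g (A x))
    (fstar : ℝ) (hfstar : fstar = g ustar)
    (S : Set (EuclideanSpace ℝ (Fin n))) (hS : S = {x | A x = ustar}) :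
    S = {x | ∀ y : EuclideanSpace ℝ (Fin n), f x ≤ f y} ∧
    ∀ x : EuclideanSpace ℝ (Fin n),
      μ * σmin ^ 2 / 2 * Metric.infDist x S ^ 2 ≤ f x - fstar :=
  quadratic_growth_of_strongly_convex_composition_general A σmin hσmin g μ hμ hsc ustar hustar
    hrange f hf fstar hfstar S hS
end

section
/- (Cumulative distance bound, Lemma 1 eq. (13), deterministic errors.) Let A : ℝⁿ → ℝᵐ be a nonzero linear map with smallest nonzero singular value σ_min and largest singular value σ_max, and set χ := σ_min/σ_max. For k = 1, …, K let f_k : ℝⁿ → ℝ be convex and differentiable with L-Lipschitz gradient, with set of minimizers X_k* = {x : A x = u_k*} for some u_k* in the range of A, with ∇f_k vanishing on X_k*, and satisfying quadratic growth f_k(x) − f_k* ≥ (μ/2) dist(x, X_k*)² with a common constant μ > 0. Fix ε_k ≥ 0, ν ≥ 0, α > 0 with αL(1+ν)² < 1; set ℓ² := 1 − μα(1 − αL(1+ν)²) + 2ναL, assume 0 < ℓ < χ, and ζ := α(1+αL)/ℓ. Let x_1 ∈ ℝⁿ and define x_{k+1} = x_k − α(∇f_k(x_k) + e_k) where ‖e_k‖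 ≤ ε_k + ν‖∇f_k(x_k)‖. Choose any x_k* ∈ X_k* and set W_K := Σ_{k=2}^K ‖x_k* − x_{k−1}*‖ and E_K := Σ_{k=1}^K ε_k. Then Σ_{k=1}^K dist(x_k, X_k*) ≤ (‖x_1 − x_1*‖ + W_K + ζ E_K) / (χ − ℓ). -/
/-!
Each inexact gradient step contracts the distance to the current solution set `X_k` by the
factor `ℓ`, up to an additive `α ε_k`: this follows from cocoercivity of `∇f_k` at `X_k`
together with quadratic growth. Since all the `X_k` are translates of `ker A`, switching from
`X_k` to `X_{k+1}` costs only the factor `χ`, because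
`σ_min dist(z, X_{k+1}) ≤ ‖A z - u_{k+1}‖ ≤ σ_max (dist(z, X_k) + ‖x_{k+1}* - x_k*‖)`.
Hence, with `d_k = dist(x_k, X_k)`, `χ d_{k+1} ≤ ℓ d_k + α ε_k + ‖x_{k+1}* - x_k*‖`, and
summing over `k` gives the claim, using `χ d_1 ≤ ‖x_1 - x_1*‖` and `α ≤ ζ`.
-/

open RealInnerProductSpace Metric

section SmoothConvex

variable {F : Type*} [NormedAddCommGroup F] [InnerProductSpace ℝ F] [CompleteSpace F] {f : F → ℝ}

theorem DifferentiableAt.hasDerivAt_comp_add_smul {x v : F} {t : ℝ}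
    (hf : DifferentiableAt ℝ f (x + t • v)) :
    HasDerivAt (fun s : ℝ => f (x + s • v)) ⟪gradient f (x + t • v), v⟫ t := by
  have hline : HasDerivAt (fun s : ℝ => x + s • v) v t := by
    simpa using ((hasDerivAt_id t).smul_const v).const_add x
  have h : HasDerivAt (fun s : ℝ => f (x + s • v))
      (InnerProductSpace.toDual ℝ F (gradient f (x + t • v)) v) t :=
    hf.hasGradientAt.hasFDerivAt.comp_hasDerivAt t hline
  rwa [InnerProductSpace.toDual_apply_apply] at h

theorem ConvexOn.add_inner_gradient_le (hc : ConvexOn ℝ Set.univ f) {x : F}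
    (hf : DifferentiableAt ℝ f x) (y : F) : f x + ⟪gradient f x, y - x⟫ ≤ f y := by
  have hline : ConvexOn ℝ Set.univ (fun t : ℝ => f (x + t • (y - x))) := by
    simpa [Function.comp_def, AffineMap.lineMap_apply, add_comm] using
      hc.comp_affineMap (AffineMap.lineMap x y)
  have := hline.le_slope_of_hasDerivAt (Set.mem_univ 0) (Set.mem_univ 1) one_pos
    (DifferentiableAt.hasDerivAt_comp_add_smul (by simpa using hf))
  simp only [slope_def_field, one_smul, zero_smul, add_zero, add_sub_cancel, sub_zero,
    div_one] at this
  linarith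

theorem le_add_inner_gradient_add_sq (hf : Differentiable ℝ f) {L : ℝ}
    (hLip : ∀ u v : F, ‖gradient f u - gradient f v‖ ≤ L * ‖u - v‖) (x y : F) :
    f y ≤ f x + ⟪gradient f x, y - x⟫ + L / 2 * ‖y - x‖ ^ 2 := by
  set v := y - x
  -- `ψ` is the gap in the claimed inequality along the segment; its derivative is `≤ 0`.
  set ψ : ℝ → ℝ := fun t => f (x + t • v) - t * ⟪gradient f x, v⟫ - L * ‖v‖ ^ 2 / 2 * t ^ 2
  have hψ : ∀ t, HasDerivAt ψ (⟪gradient f (x + t • v) - gradient f x, v⟫ - L * ‖v‖ ^ 2 * t) t :=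
    fun t => (((hf _).hasDerivAt_comp_add_smul.sub ((hasDerivAt_id t).mul_const _)).sub
      ((hasDerivAt_pow 2 t).const_mul _)).congr_deriv (by rw [inner_sub_left]; ring)
  have hanti : AntitoneOn ψ (Set.Icc 0 1) := by
    refine antitoneOn_of_deriv_nonpos (convex_Icc 0 1)
      (fun t _ => (hψ t).continuousAt.continuousWithinAt)
      (fun t _ => (hψ t).differentiableAt.differentiableWithinAt) fun t ht => ?_
    rw [interior_Icc] at ht
    have hinner : ⟪gradient f (x + t • v) - gradient f x, v⟫ ≤ L * t * ‖v‖ ^ 2 :=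
      calc _ ≤ ‖gradient f (x + t • v) - gradient f x‖ * ‖v‖ := real_inner_le_norm _ _
        _ ≤ L * ‖(x + t • v) - x‖ * ‖v‖ := by gcongr; exact hLip _ _
        _ = L * t * ‖v‖ ^ 2 := by
          rw [add_sub_cancel_left, norm_smul, Real.norm_of_nonneg ht.1.le]; ring
    rw [(hψ t).deriv]
    linarith
  have := hanti (Set.left_mem_Icc.2 zero_le_one) (Set.right_mem_Icc.2 zero_le_one) zero_le_one
  simp only [ψ, v, one_smul, add_sub_cancel, zero_smul, add_zero] at this
  linarith

theorem ConvexOn.add_inner_gradient_add_sq_div_le (hc : ConvexOn ℝ Set.univ f)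
    (hf : Differentiable ℝ f) {L : ℝ} (hL : 0 < L)
    (hLip : ∀ u v : F, ‖gradient f u - gradient f v‖ ≤ L * ‖u - v‖) (x y : F) :
    f x + ⟪gradient f x, y - x⟫ + ‖gradient f y - gradient f x‖ ^ 2 / (2 * L) ≤ f y := by
  set Δ := gradient f y - gradient f x
  -- Compare `f y` with `f` at the gradient step `z` from `y`, using convexity at `x`.
  set z := y - L⁻¹ • Δ
  have hupper := le_add_inner_gradient_add_sq hf hLip y z
  have hlower := hc.add_inner_gradient_le (hf x) z
  have hzy : z - y = -(L⁻¹ • Δ) := by simp [z]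
  have hzx : z - x = (y - x) - L⁻¹ • Δ := by simp only [z]; abel
  rw [hzy, norm_neg, norm_smul, inner_neg_right, real_inner_smul_right] at hupper
  rw [hzx, inner_sub_right, real_inner_smul_right] at hlower
  have hΔ : ⟪gradient f y, Δ⟫ - ⟪gradient f x, Δ⟫ = ‖Δ‖ ^ 2 := by
    rw [← inner_sub_left, real_inner_self_eq_norm_sq]
  rw [Real.norm_of_nonneg (inv_nonneg.2 hL.le)] at hupper
  have key : L / 2 * (L⁻¹ * ‖Δ‖) ^ 2 + ‖Δ‖ ^ 2 / (2 * L) = L⁻¹ * ‖Δ‖ ^ 2 := by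
    field_simp; ring
  have hΔ' : L⁻¹ * ⟪gradient f y, Δ⟫ - L⁻¹ * ⟪gradient f x, Δ⟫ = L⁻¹ * ‖Δ‖ ^ 2 := by
    rw [← mul_sub, hΔ]
  linarith

theorem ConvexOn.sq_norm_gradient_le_mul_inner_of_gradient_eq_zero (hc : ConvexOn ℝ Set.univ f)
    (hf : Differentiable ℝ f) {L : ℝ} (hL : 0 < L)
    (hLip : ∀ u v : F, ‖gradient f u - gradient f v‖ ≤ L * ‖u - v‖) (x : F) {y : F}
    (hy : gradient f y = 0) : ‖gradient f x‖ ^ 2 ≤ L * ⟪gradient f x, x - y⟫ := by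
  have hxy := hc.add_inner_gradient_add_sq_div_le hf hL hLip x y
  have hyx := hc.add_inner_gradient_add_sq_div_le hf hL hLip y x
  rw [hy] at hxy hyx
  rw [← neg_sub x y, inner_neg_right] at hxy
  simp only [zero_sub, norm_neg, sub_zero, inner_zero_left, add_zero] at hxy hyx
  have : ‖gradient f x‖ ^ 2 / L ≤ ⟪gradient f x, x - y⟫ := by
    have h2 : ‖gradient f x‖ ^ 2 / L = 2 * (‖gradient f x‖ ^ 2 / (2 * L)) := by field_simp
    linarith
  rwa [div_le_iff₀ hL, mul_comm] at this

end SmoothConvex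

section InnerProductSpace

variable {F : Type*} [NormedAddCommGroup F] [InnerProductSpace ℝ F]

theorem norm_sub_smul_add_mul_norm_le {v g : F} {L μ ν α ℓ : ℝ} (hL : 0 < L) (hν : 0 ≤ ν)
    (hα : 0 < α) (hstep : α * L * (1 + ν) ^ 2 ≤ 1) (hℓ : 0 ≤ ℓ)
    (hℓsq : ℓ ^ 2 = 1 - μ * α * (1 - α * L * (1 + ν) ^ 2) + 2 * ν * α * L)
    (hcoc : ‖g‖ ^ 2 ≤ L * ⟪g, v⟫) (hqg : μ / 2 * ‖v‖ ^ 2 ≤ ⟪g, v⟫) (hlip : ‖g‖ ≤ L * ‖v‖) :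
    ‖v - α • g‖ + α * ν * ‖g‖ ≤ ℓ * ‖v‖ := by
  set s := 1 - α * L * (1 + ν) ^ 2
  have hs : 0 ≤ s := by linarith
  have hαL : α * L ≤ 1 := by
    nlinarith [mul_nonneg (mul_pos hα hL).le (by positivity : 0 ≤ 2 * ν + ν ^ 2)]
  have hI : 0 ≤ ⟪g, v⟫ := nonneg_of_mul_nonneg_right ((sq_nonneg _).trans hcoc) hL
  have hN : ‖v - α • g‖ ^ 2 = ‖v‖ ^ 2 - 2 * α * ⟪g, v⟫ + α ^ 2 * ‖g‖ ^ 2 := by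
    rw [norm_sub_sq_real, real_inner_smul_right, norm_smul, Real.norm_of_nonneg hα.le,
      real_inner_comm]
    ring
  have hNle : ‖v - α • g‖ ≤ ‖v‖ := by
    refine (pow_le_pow_iff_left₀ (norm_nonneg _) (norm_nonneg _) two_ne_zero).1 ?_
    nlinarith [mul_le_mul_of_nonneg_left hcoc (sq_nonneg α), mul_le_mul_of_nonneg_right hαL
      (mul_nonneg hα.le hI)]
  -- Split `2α⟪g, v⟫` with weights `s` and `1 - s`, bounding the first part by quadratic growth
  -- and the second by cocoercivity.
  have hsplit : α * μ * s * ‖v‖ ^ 2 + 2 * α ^ 2 * (1 + ν) ^ 2 * ‖g‖ ^ 2 ≤ 2 * α * ⟪g, v⟫ := by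
    nlinarith [mul_le_mul_of_nonneg_left hqg (mul_nonneg hα.le hs),
      mul_le_mul_of_nonneg_left hcoc (by positivity : 0 ≤ α ^ 2 * (1 + ν) ^ 2)]
  have hcross : ‖v - α • g‖ * ‖g‖ ≤ L * ‖v‖ ^ 2 := by
    linarith [mul_le_mul hNle hlip (norm_nonneg _) (norm_nonneg _)]
  refine (pow_le_pow_iff_left₀ (by positivity) (by positivity) two_ne_zero).1 ?_
  rw [mul_pow, hℓsq]
  nlinarith [mul_le_mul_of_nonneg_left hcross (by positivity : 0 ≤ 2 * α * ν),
    (by positivity : 0 ≤ α ^ 2 * ‖g‖ ^ 2 * (1 + 4 * ν + ν ^ 2))]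

theorem ConvexOn.infDist_sub_smul_gradient_add_le [ProperSpace F] {f : F → ℝ}
    (hc : ConvexOn ℝ Set.univ f) (hf : Differentiable ℝ f) {L : ℝ} (hL : 0 < L)
    (hLip : ∀ u v : F, ‖gradient f u - gradient f v‖ ≤ L * ‖u - v‖) {X : Set F}
    (hXc : IsClosed X) (hXne : X.Nonempty) (hX : ∀ y ∈ X, gradient f y = 0) {fs : ℝ}
    (hfs : ∀ y ∈ X, f y = fs) {μ : ℝ} (hQG : ∀ z, μ / 2 * infDist z X ^ 2 ≤ f z - fs)
    {ε ν α ℓ : ℝ} (hν : 0 ≤ ν) (hα : 0 < α) (hstep : α * L * (1 + ν) ^ 2 ≤ 1) (hℓ : 0 ≤ ℓ)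
    (hℓsq : ℓ ^ 2 = 1 - μ * α * (1 - α * L * (1 + ν) ^ 2) + 2 * ν * α * L) {x e : F}
    (he : ‖e‖ ≤ ε + ν * ‖gradient f x‖) :
    infDist (x - α • (gradient f x + e)) X ≤ ℓ * infDist x X + α * ε := by
  obtain ⟨y, hyX, hxy⟩ := hXc.exists_infDist_eq_dist hXne x
  rw [dist_eq_norm] at hxy
  have hqg : μ / 2 * ‖x - y‖ ^ 2 ≤ ⟪gradient f x, x - y⟫ := by
    have hconv := hc.add_inner_gradient_le (hf x) y
    rw [← neg_sub x y, inner_neg_right, hfs y hyX] at hconv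
    linarith [hxy ▸ hQG x]
  have hlip : ‖gradient f x‖ ≤ L * ‖x - y‖ := by simpa [hX y hyX] using hLip x y
  have hgap := norm_sub_smul_add_mul_norm_le hL hν hα hstep hℓ hℓsq
    (hc.sq_norm_gradient_le_mul_inner_of_gradient_eq_zero hf hL hLip x (hX y hyX)) hqg hlip
  have hrearr : x - α • (gradient f x + e) - y = (x - y - α • gradient f x) - α • e := by
    rw [smul_add]; abel
  calc infDist (x - α • (gradient f x + e)) X
      ≤ ‖(x - y - α • gradient f x) - α • e‖ := by
        simpa only [dist_eq_norm, hrearr] using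
          infDist_le_dist_of_mem (x := x - α • (gradient f x + e)) hyX
    _ ≤ ‖x - y - α • gradient f x‖ + α * ‖e‖ := by
        refine (norm_sub_le _ _).trans_eq ?_
        rw [norm_smul, Real.norm_of_nonneg hα.le]
    _ ≤ ℓ * infDist x X + α * ε := by
        rw [hxy]; linarith [mul_le_mul_of_nonneg_left he hα.le]

end InnerProductSpace

section SingularValue

variable {E F : Type*} [NormedAddCommGroup E] [InnerProductSpace ℝ E]
  [NormedAddCommGroup F] [NormedSpace ℝ F]

-- When `(ker A)ᗮ = ⊥` the set is empty and this is `sInf ∅ = 0`.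
noncomputable def ContinuousLinearMap.minPosSingularValue (A : E →L[ℝ] F) : ℝ :=
  sInf {c : ℝ | ∃ x : E, x ≠ 0 ∧ x ∈ (LinearMap.ker (A : E →ₗ[ℝ] F))ᗮ ∧ c = ‖A x‖ / ‖x‖}

namespace ContinuousLinearMap

variable (A : E →L[ℝ] F)

theorem minPosSingularValue_nonneg : 0 ≤ A.minPosSingularValue :=
  Real.sInf_nonneg <| by rintro _ ⟨x, -, -, rfl⟩; positivity

theorem minPosSingularValue_mul_norm_le {x : E} (hx : x ∈ (LinearMap.ker (A : E →ₗ[ℝ] F))ᗮ) :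
    A.minPosSingularValue * ‖x‖ ≤ ‖A x‖ := by
  rcases eq_or_ne x 0 with rfl | hx0
  · simp
  · rw [← le_div_iff₀ (norm_pos_iff.2 hx0)]
    refine csInf_le ⟨0, ?_⟩ ⟨x, hx0, hx, rfl⟩
    rintro _ ⟨y, -, -, rfl⟩
    positivity

theorem minPosSingularValue_le_opNorm : A.minPosSingularValue ≤ ‖A‖ := by
  by_cases h : ∃ x : E, x ≠ 0 ∧ x ∈ (LinearMap.ker (A : E →ₗ[ℝ] F))ᗮ
  · obtain ⟨x, hx0, hx⟩ := h
    refine le_of_mul_le_mul_right ?_ (norm_pos_iff.2 hx0)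
    exact (A.minPosSingularValue_mul_norm_le hx).trans (A.le_opNorm x)
  · have : {c : ℝ | ∃ x : E, x ≠ 0 ∧ x ∈ (LinearMap.ker (A : E →ₗ[ℝ] F))ᗮ ∧
        c = ‖A x‖ / ‖x‖} = ∅ :=
      Set.eq_empty_of_forall_notMem fun _ ⟨x, hx0, hx, _⟩ => h ⟨x, hx0, hx⟩
    rw [minPosSingularValue, this, Real.sInf_empty]
    exact norm_nonneg A

theorem minPosSingularValue_mul_infDist_le [FiniteDimensional ℝ E] (x y : E) :
    A.minPosSingularValue * infDist x {z | A z = A y} ≤ ‖A x - A y‖ := by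
  obtain ⟨z, hz, w, hw, hxy⟩ :=
    (LinearMap.ker (A : E →ₗ[ℝ] F)).exists_add_mem_mem_orthogonal (x - y)
  have hAz : A z = 0 := hz
  have hdist : infDist x {z | A z = A y} ≤ ‖w‖ := by
    have : x - (y + z) = w := by rw [← sub_sub, hxy]; abel
    simpa [dist_eq_norm, this] using
      infDist_le_dist_of_mem (x := x) (y := y + z) (show A (y + z) = A y by simp [hAz])
  rw [← map_sub, hxy, map_add, hAz, zero_add]
  exact (mul_le_mul_of_nonneg_left hdist A.minPosSingularValue_nonneg).trans
    (A.minPosSingularValue_mul_norm_le hw)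

theorem norm_sub_le_opNorm_mul_infDist [ProperSpace E] (x y : E) :
    ‖A x - A y‖ ≤ ‖A‖ * infDist x {z | A z = A y} := by
  obtain ⟨z, hz, hxz⟩ := (isClosed_eq A.continuous continuous_const).exists_infDist_eq_dist
    ⟨y, rfl⟩ x
  rw [hxz, dist_eq_norm, ← show A z = A y from hz, ← map_sub]
  exact A.le_opNorm _

theorem minPosSingularValue_div_opNorm_mul_infDist_le [FiniteDimensional ℝ E] (hA : A ≠ 0)
    (x y y' : E) : A.minPosSingularValue / ‖A‖ * infDist x {z | A z = A y'} ≤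
      infDist x {z | A z = A y} + ‖y' - y‖ := by
  rw [div_mul_eq_mul_div, div_le_iff₀ (norm_pos_iff.2 hA)]
  calc A.minPosSingularValue * infDist x {z | A z = A y'}
      ≤ ‖A x - A y'‖ := A.minPosSingularValue_mul_infDist_le x y'
    _ ≤ ‖A x - A y‖ + ‖A y - A y'‖ := norm_sub_le_norm_sub_add_norm_sub _ _ _
    _ ≤ ‖A‖ * infDist x {z | A z = A y} + ‖A‖ * ‖y - y'‖ := by
      gcongr
      · exact A.norm_sub_le_opNorm_mul_infDist x y
      · rw [← map_sub]; exact A.le_opNorm _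
    _ = _ := by rw [norm_sub_rev]; ring

end ContinuousLinearMap

end SingularValue

open Finset in
theorem sub_mul_sum_Icc_le {χ ℓ : ℝ} {d b : ℕ → ℝ} {K : ℕ} (hχ : 0 ≤ χ) (hℓ : 0 ≤ ℓ)
    (hd : ∀ k, 0 ≤ d k) (h : ∀ k ∈ Ico 1 K, χ * d (k + 1) ≤ ℓ * d k + b k) :
    (χ - ℓ) * ∑ k ∈ Icc 1 K, d k ≤ χ * d 1 + ∑ k ∈ Ico 1 K, b k := by
  have hshift : ∑ k ∈ Icc 1 K, d k ≤ d 1 + ∑ k ∈ Ico 1 K, d (k + 1) := by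
    rcases Nat.eq_zero_or_pos K with rfl | hK
    · simpa using hd 1
    · rw [sum_Ico_add', ← Ico_add_one_right_eq_Icc, sum_eq_sum_Ico_succ_bot (by omega)]
  have hsub : ∑ k ∈ Ico 1 K, d k ≤ ∑ k ∈ Icc 1 K, d k :=
    sum_le_sum_of_subset_of_nonneg Ico_subset_Icc_self fun k _ _ => hd k
  calc (χ - ℓ) * ∑ k ∈ Icc 1 K, d k
      ≤ χ * (d 1 + ∑ k ∈ Ico 1 K, d (k + 1)) - ℓ * ∑ k ∈ Icc 1 K, d k := by
        rw [sub_mul]; gcongr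
    _ ≤ χ * d 1 + ∑ k ∈ Ico 1 K, (ℓ * d k + b k) - ℓ * ∑ k ∈ Icc 1 K, d k := by
        rw [mul_add, mul_sum]; gcongr with k hk; exact h k hk
    _ ≤ χ * d 1 + ∑ k ∈ Ico 1 K, b k := by
        rw [sum_add_distrib, ← mul_sum]; linarith [mul_le_mul_of_nonneg_left hsub hℓ]

theorem cumulative_distance_bound_inexact_ogd_general {n m : ℕ} (K : ℕ)
    (A : EuclideanSpace ℝ (Fin n) →L[ℝ] EuclideanSpace ℝ (Fin m)) (hA : A ≠ 0)
    (σmin σmax χ : ℝ)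
    (hσmin : σmin = sInf {c : ℝ | ∃ x : EuclideanSpace ℝ (Fin n),
      x ≠ 0 ∧ x ∈ (LinearMap.ker (A : EuclideanSpace ℝ (Fin n) →ₗ[ℝ] EuclideanSpace ℝ (Fin m)))ᗮ ∧ c = ‖A x‖ / ‖x‖})
    (hσmax : σmax = ‖A‖) (hχ : χ = σmin / σmax)
    (f : ℕ → EuclideanSpace ℝ (Fin n) → ℝ)
    (hconv : ∀ k, ConvexOn ℝ Set.univ (f k)) (hdiff : ∀ k, Differentiable ℝ (f k))
    (L : ℝ) (hL : 0 < L)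
    (hLip : ∀ k, ∀ u v : EuclideanSpace ℝ (Fin n),
      ‖gradient (f k) u - gradient (f k) v‖ ≤ L * ‖u - v‖)
    (ustar : ℕ → EuclideanSpace ℝ (Fin m))
    (Xstar : ℕ → Set (EuclideanSpace ℝ (Fin n)))
    (hXstar : ∀ k, Xstar k = {x | A x = ustar k})
    (hgrad0 : ∀ k, ∀ y ∈ Xstar k, gradient (f k) y = 0)
    (fstar : ℕ → ℝ) (hfstar : ∀ k, ∀ x ∈ Xstar k, f k x = fstar k)
    (μ : ℝ)
    (hQG : ∀ k, ∀ x : EuclideanSpace ℝ (Fin n),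
      μ / 2 * Metric.infDist x (Xstar k) ^ 2 ≤ f k x - fstar k)
    (ε : ℕ → ℝ) (hε : ∀ k, 0 ≤ ε k) (ν α : ℝ) (hν : 0 ≤ ν) (hα : 0 < α)
    (hstep : α * L * (1 + ν) ^ 2 < 1)
    (ℓ ζ : ℝ) (hℓpos : 0 < ℓ)
    (hℓsq : ℓ ^ 2 = 1 - μ * α * (1 - α * L * (1 + ν) ^ 2) + 2 * ν * α * L)
    (hℓχ : ℓ < χ) (hζ : ζ = α * (1 + α * L) / ℓ)
    (x e : ℕ → EuclideanSpace ℝ (Fin n))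
    (hrec : ∀ k, 1 ≤ k → k ≤ K →
      x (k + 1) = x k - α • (gradient (f k) (x k) + e k))
    (herr : ∀ k, 1 ≤ k → k ≤ K → ‖e k‖ ≤ ε k + ν * ‖gradient (f k) (x k)‖)
    (xstar : ℕ → EuclideanSpace ℝ (Fin n)) (hxstar : ∀ k, xstar k ∈ Xstar k)
    (W E : ℝ)
    (hW : W = ∑ k ∈ Finset.Icc 2 K, ‖xstar k - xstar (k - 1)‖)
    (hE : E = ∑ k ∈ Finset.Icc 1 K, ε k) :
    ∑ k ∈ Finset.Icc 1 K, Metric.infDist (x k) (Xstar k) ≤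
      (‖x 1 - xstar 1‖ + W + ζ * E) / (χ - ℓ) := by
  have hχA : χ = A.minPosSingularValue / ‖A‖ := by rw [hχ, hσmax, hσmin]; rfl
  have hχ0 : 0 ≤ χ := hχA ▸ div_nonneg A.minPosSingularValue_nonneg (norm_nonneg A)
  have hχ1 : χ ≤ 1 := hχA ▸ div_le_one_of_le₀ A.minPosSingularValue_le_opNorm (norm_nonneg A)
  have hAX : ∀ k, Xstar k = {z | A z = A (xstar k)} := fun k => by
    have hAxstar : A (xstar k) = ustar k := by simpa [hXstar k] using hxstar k
    rw [hXstar k, hAxstar]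
  have hrecursion : ∀ k ∈ Finset.Ico 1 K, χ * infDist (x (k + 1)) (Xstar (k + 1)) ≤
      ℓ * infDist (x k) (Xstar k) + (α * ε k + ‖xstar (k + 1) - xstar k‖) := by
    intro k hk
    obtain ⟨hk1, hkK⟩ := Finset.mem_Ico.1 hk
    have hcontr := (hconv k).infDist_sub_smul_gradient_add_le (hdiff k) hL (hLip k)
      (hAX k ▸ isClosed_eq A.continuous continuous_const) ⟨xstar k, hxstar k⟩ (hgrad0 k)
      (hfstar k) (hQG k) hν hα hstep.le hℓpos.le hℓsq (herr k hk1 hkK.le)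
    have hshift := A.minPosSingularValue_div_opNorm_mul_infDist_le hA (x (k + 1)) (xstar k)
      (xstar (k + 1))
    rw [← hAX, ← hAX, ← hχA] at hshift
    rw [← hrec k hk1 hkK.le] at hcontr
    linarith
  have hsum := sub_mul_sum_Icc_le hχ0 hℓpos.le (fun k => infDist_nonneg) hrecursion
  have hstart : χ * infDist (x 1) (Xstar 1) ≤ ‖x 1 - xstar 1‖ :=
    (mul_le_of_le_one_left infDist_nonneg hχ1).trans
      (by simpa [dist_eq_norm] using infDist_le_dist_of_mem (x := x 1) (hxstar 1))
  have hdrift : ∑ k ∈ Finset.Ico 1 K, ‖xstar (k + 1) - xstar k‖ = W := by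
    rw [hW, ← Finset.Ico_add_one_right_eq_Icc]
    simpa using Finset.sum_Ico_add' (fun k => ‖xstar k - xstar (k - 1)‖) 1 K 1
  have hαζ : α ≤ ζ := by
    rw [hζ, le_div_iff₀ hℓpos]
    nlinarith [mul_pos (mul_pos hα hα) hL]
  have herrors : α * ∑ k ∈ Finset.Ico 1 K, ε k ≤ ζ * E := by
    rw [hE]
    exact mul_le_mul hαζ (Finset.sum_le_sum_of_subset_of_nonneg Finset.Ico_subset_Icc_self
      fun k _ _ => hε k) (Finset.sum_nonneg fun k _ => hε k) (hα.le.trans hαζ)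
  rw [Finset.sum_add_distrib, ← Finset.mul_sum, hdrift] at hsum
  rw [le_div_iff₀ (by linarith), mul_comm]
  linarith

/-- Cumulative distance bound (Lemma 1 eq. (13), deterministic errors):
`Σ_{k=1}^K dist(x_k, X_k*) ≤ (‖x_1 − x_1*‖ + W_K + ζ E_K) / (χ − ℓ)`. -/
theorem cumulative_distance_bound_inexact_ogd {n m : ℕ} (K : ℕ)
    (A : EuclideanSpace ℝ (Fin n) →L[ℝ] EuclideanSpace ℝ (Fin m)) (hA : A ≠ 0)
    (σmin σmax χ : ℝ)
    (hσmin : σmin = sInf {c : ℝ | ∃ x : EuclideanSpace ℝ (Fin n),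
      x ≠ 0 ∧ x ∈ (LinearMap.ker (A : EuclideanSpace ℝ (Fin n) →ₗ[ℝ] EuclideanSpace ℝ (Fin m)))ᗮ ∧ c = ‖A x‖ / ‖x‖})
    (hσmax : σmax = ‖A‖) (hχ : χ = σmin / σmax)
    (f : ℕ → EuclideanSpace ℝ (Fin n) → ℝ)
    (hconv : ∀ k, ConvexOn ℝ Set.univ (f k)) (hdiff : ∀ k, Differentiable ℝ (f k))
    (L : ℝ) (hL : 0 < L)
    (hLip : ∀ k, ∀ u v : EuclideanSpace ℝ (Fin n),
      ‖gradient (f k) u - gradient (f k) v‖ ≤ L * ‖u - v‖)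
    (ustar : ℕ → EuclideanSpace ℝ (Fin m)) (hrange : ∀ k, ustar k ∈ Set.range A)
    (Xstar : ℕ → Set (EuclideanSpace ℝ (Fin n)))
    (hXstar : ∀ k, Xstar k = {x | A x = ustar k})
    (hXmin : ∀ k, Xstar k = {x | ∀ y : EuclideanSpace ℝ (Fin n), f k x ≤ f k y})
    (hgrad0 : ∀ k, ∀ y ∈ Xstar k, gradient (f k) y = 0)
    (fstar : ℕ → ℝ) (hfstar : ∀ k, ∀ x ∈ Xstar k, f k x = fstar k)
    (μ : ℝ) (hμ : 0 < μ)
    (hQG : ∀ k, ∀ x : EuclideanSpace ℝ (Fin n),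
      μ / 2 * Metric.infDist x (Xstar k) ^ 2 ≤ f k x - fstar k)
    (ε : ℕ → ℝ) (hε : ∀ k, 0 ≤ ε k) (ν α : ℝ) (hν : 0 ≤ ν) (hα : 0 < α)
    (hstep : α * L * (1 + ν) ^ 2 < 1)
    (ℓ ζ : ℝ) (hℓpos : 0 < ℓ)
    (hℓsq : ℓ ^ 2 = 1 - μ * α * (1 - α * L * (1 + ν) ^ 2) + 2 * ν * α * L)
    (hℓχ : ℓ < χ) (hζ : ζ = α * (1 + α * L) / ℓ)
    (x e : ℕ → EuclideanSpace ℝ (Fin n))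
    (hrec : ∀ k, 1 ≤ k → k ≤ K →
      x (k + 1) = x k - α • (gradient (f k) (x k) + e k))
    (herr : ∀ k, 1 ≤ k → k ≤ K → ‖e k‖ ≤ ε k + ν * ‖gradient (f k) (x k)‖)
    (xstar : ℕ → EuclideanSpace ℝ (Fin n)) (hxstar : ∀ k, xstar k ∈ Xstar k)
    (W E : ℝ)
    (hW : W = ∑ k ∈ Finset.Icc 2 K, ‖xstar k - xstar (k - 1)‖)
    (hE : E = ∑ k ∈ Finset.Icc 1 K, ε k) :
    ∑ k ∈ Finset.Icc 1 K, Metric.infDist (x k) (Xstar k) ≤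
      (‖x 1 - xstar 1‖ + W + ζ * E) / (χ - ℓ) :=
  cumulative_distance_bound_inexact_ogd_general K A hA σmin σmax χ hσmin hσmax hχ f hconv hdiff L hL
    hLip ustar Xstar hXstar hgrad0 fstar hfstar μ hQG ε hε ν α hν hα hstep ℓ ζ hℓpos hℓsq hℓχ hζ x e
    hrec herr xstar hxstar W E hW hE
end

section
/- (Per-step tracking recursion, deterministic errors.) Let A : ℝⁿ → ℝᵐ be a nonzero linear map with smallest nonzero singular value σ_min and largest singular value σ_max; set χ := σ_min/σ_max. Let f : ℝⁿ → ℝ be convex and differentiable with L-Lipschitz gradient, with set of minimizers S = {x : A x = u} for u in the range of A, ∇f vanishing on S, and satisfying quadratic growth f(x) − f* ≥ (μ/2) dist(x, S)² with μ > 0. Let S' = {x : A x = u'} for u' in the range of A, and suppose there exist x* ∈ S and y* ∈ S' with ‖y* − x*‖ ≤ σ_v. Fix ε ≥ 0, ν ≥ 0, α > 0 with αL(1+ν)² < 1; set ℓ² := 1 − μα(1 − αL(1+ν)²) + 2ναL, assume 0 < ℓ² < 1, and ζ := α(1+αL)/ℓ. Then for any x ∈ ℝⁿ and e ∈ ℝⁿ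 with ‖e‖ ≤ ε + ν‖∇f(x)‖, the update x⁺ = x − α(∇f(x) + e) satisfies dist(x⁺, S') ≤ (ℓ/χ) dist(x, S) + (ζε + σ_v)/χ. -/
/-! Let `p` be the projection of `x` onto `S`. Convexity (`f x - f* ≤ ⟪∇f x, x - p⟫`), quadratic
growth, and the bound `‖∇f x‖² ≤ 2L (f x - f*)` coming from the descent lemma combine into
`‖x - α ∇f x - p‖ + αν ‖∇f x‖ ≤ ℓ ‖x - p‖`; the part of the error not proportional to `∇f x`
costs `αε`. Translating `p` by `y* - x*` lands in `S'` at cost `σ_v`. Finally `0 < χ ≤ 1` and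
`α ≤ ζ`, so dividing by `χ` only weakens the bound. -/

open Metric Set

section SingularValue

variable {E F : Type*} [NormedAddCommGroup E] [InnerProductSpace ℝ E] [FiniteDimensional ℝ E]
  [NormedAddCommGroup F] [NormedSpace ℝ F]

noncomputable def minNonzeroSingularValue (A : E →L[ℝ] F) : ℝ :=
  sInf {c : ℝ | ∃ x : E,
    x ≠ 0 ∧ x ∈ (LinearMap.ker A.toLinearMap)ᗮ ∧ c = ‖A x‖ / ‖x‖}

lemma exists_mem_ker_orthogonal_ne_zero {A : E →L[ℝ] F} (hA : A ≠ 0) :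
    ∃ x ∈ (LinearMap.ker A.toLinearMap)ᗮ, x ≠ 0 := by
  refine Submodule.exists_mem_ne_zero_of_ne_bot fun hbot => hA ?_
  ext x
  have hker : LinearMap.ker A.toLinearMap = ⊤ := Submodule.orthogonal_eq_bot_iff.mp hbot
  exact LinearMap.mem_ker.mp (hker ▸ Submodule.mem_top)

lemma exists_pos_mul_norm_le_norm_apply_of_mem_ker_orthogonal (A : E →L[ℝ] F) :
    ∃ c > 0, ∀ x ∈ (LinearMap.ker A.toLinearMap)ᗮ, c * ‖x‖ ≤ ‖A x‖ := by
  set K := LinearMap.ker A.toLinearMap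
  have hinj : LinearMap.ker (A.toLinearMap.domRestrict Kᗮ) = ⊥ := by
    refine LinearMap.ker_eq_bot'.mpr fun z hz => Subtype.ext ?_
    exact Submodule.disjoint_def.mp (Submodule.orthogonal_disjoint K) z
      (LinearMap.mem_ker.mpr (by simpa using hz)) z.2
  obtain ⟨C, hC, hanti⟩ := LinearMap.exists_antilipschitzWith _ hinj
  refine ⟨(C : ℝ)⁻¹, inv_pos.mpr hC, fun x hx => ?_⟩
  have := hanti.le_mul_dist ⟨x, hx⟩ 0
  rw [inv_mul_le_iff₀ (by exact_mod_cast hC)]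
  simpa [dist_eq_norm] using this

lemma minNonzeroSingularValue_pos {A : E →L[ℝ] F} (hA : A ≠ 0) :
    0 < minNonzeroSingularValue A := by
  obtain ⟨c, hc, hbound⟩ := exists_pos_mul_norm_le_norm_apply_of_mem_ker_orthogonal A
  obtain ⟨x₀, hx₀, hx₀_ne⟩ := exists_mem_ker_orthogonal_ne_zero hA
  refine hc.trans_le (le_csInf ⟨_, x₀, hx₀_ne, hx₀, rfl⟩ ?_)
  rintro _ ⟨x, hx_ne, hx, rfl⟩
  rw [le_div_iff₀ (norm_pos_iff.mpr hx_ne)]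
  exact hbound x hx

lemma minNonzeroSingularValue_le_opNorm {A : E →L[ℝ] F} (hA : A ≠ 0) :
    minNonzeroSingularValue A ≤ ‖A‖ := by
  obtain ⟨x₀, hx₀, hx₀_ne⟩ := exists_mem_ker_orthogonal_ne_zero hA
  unfold minNonzeroSingularValue
  refine le_trans (csInf_le ?_ ⟨x₀, hx₀_ne, hx₀, rfl⟩) (?_ : ‖A x₀‖ / ‖x₀‖ ≤ ‖A‖)
  · exact ⟨0, by rintro _ ⟨x, -, -, rfl⟩; positivity⟩
  · rw [div_le_iff₀ (norm_pos_iff.mpr hx₀_ne)]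
    exact A.le_opNorm x₀

lemma minNonzeroSingularValue_div_opNorm_mem_Ioc {A : E →L[ℝ] F} (hA : A ≠ 0) :
    minNonzeroSingularValue A / ‖A‖ ∈ Ioc 0 1 :=
  ⟨div_pos (minNonzeroSingularValue_pos hA) (norm_pos_iff.mpr hA),
    div_le_one_of_le₀ (minNonzeroSingularValue_le_opNorm hA) (norm_nonneg A)⟩

end SingularValue

lemma infDist_setOf_apply_eq_le {E F 𝓕 : Type*} [SeminormedAddCommGroup E] [AddCommGroup F]
    [FunLike 𝓕 E F] [AddMonoidHomClass 𝓕 E F] {A : 𝓕} {p xs ys : E} {u' : F}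
    (hp : A p = A xs) (hys : A ys = u') (z : E) :
    infDist z {y | A y = u'} ≤ ‖z - p‖ + ‖ys - xs‖ := by
  have hmem : p + (ys - xs) ∈ {y | A y = u'} := by
    simp only [mem_ofPred_eq, map_add, map_sub, hp, hys, add_sub_cancel]
  calc infDist z {y | A y = u'} ≤ ‖z - (p + (ys - xs))‖ := by
        simpa only [dist_eq_norm] using infDist_le_dist_of_mem hmem
    _ = ‖(z - p) - (ys - xs)‖ := by rw [sub_add_eq_sub_sub]
    _ ≤ ‖z - p‖ + ‖ys - xs‖ := norm_sub_le _ _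

lemma add_le_mul_of_gradient_step_bounds {μ L α ν ℓ d h G r : ℝ} (hL : 0 ≤ L) (hα : 0 < α)
    (hν : 0 ≤ ν) (hstep : α * L * (1 + ν) ^ 2 < 1) (hℓ : 0 ≤ ℓ)
    (hℓsq : ℓ ^ 2 = 1 - μ * α * (1 - α * L * (1 + ν) ^ 2) + 2 * ν * α * L)
    (hd : 0 ≤ d) (hh : 0 ≤ h) (hG : 0 ≤ G) (hr : 0 ≤ r)
    (hQG : μ / 2 * d ^ 2 ≤ h) (hGh : G ^ 2 ≤ 2 * L * h) (hGd : G ≤ L * d)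
    (hr2 : r ^ 2 ≤ d ^ 2 - 2 * α * h * (1 - α * L)) :
    r + α * ν * G ≤ ℓ * d := by
  have hαL : α * L ≤ 1 := by nlinarith [mul_nonneg hα.le hL]
  have hrd : r ≤ d := by nlinarith [mul_nonneg (mul_nonneg hα.le hh) (sub_nonneg.mpr hαL)]
  refine (pow_le_pow_iff_left₀ (by positivity) (by positivity) two_ne_zero).mp ?_
  set slack := α * (1 - α * L * (1 + ν) ^ 2) * (2 * h - μ * d ^ 2) + 4 * α ^ 2 * L * ν * h
  have hslack : 0 ≤ slack := by
    have : 0 ≤ 1 - α * L * (1 + ν) ^ 2 := by linarith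
    have : 0 ≤ 2 * h - μ * d ^ 2 := by linarith
    positivity
  calc (r + α * ν * G) ^ 2 = r ^ 2 + 2 * α * ν * G * r + α ^ 2 * ν ^ 2 * G ^ 2 := by ring
    _ ≤ (d ^ 2 - 2 * α * h * (1 - α * L)) + 2 * α * ν * (L * d) * d
          + α ^ 2 * ν ^ 2 * (2 * L * h) := by gcongr
    _ = (ℓ * d) ^ 2 - slack := by rw [mul_pow, hℓsq]; ring
    _ ≤ (ℓ * d) ^ 2 := sub_le_self _ hslack

section SmoothConvex

variable {E : Type*} [NormedAddCommGroup E] [InnerProductSpace ℝ E] [CompleteSpace E]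
  {f : E → ℝ}

lemma hasDerivAt_comp_lineMap (hf : Differentiable ℝ f) (x y : E) (t : ℝ) :
    HasDerivAt (f ∘ AffineMap.lineMap x y)
      (inner ℝ (gradient f (AffineMap.lineMap x y t)) (y - x)) t :=
  (hf _).hasGradientAt.hasFDerivAt.comp_hasDerivAt t AffineMap.hasDerivAt_lineMap

lemma ConvexOn.inner_gradient_le_sub (hconv : ConvexOn ℝ univ f) (hf : Differentiable ℝ f)
    (x y : E) : inner ℝ (gradient f x) (y - x) ≤ f y - f x := by
  have hφ : ConvexOn ℝ univ (f ∘ (AffineMap.lineMap x y : ℝ →ᵃ[ℝ] E)) := by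
    simpa using hconv.comp_affineMap (AffineMap.lineMap x y)
  have hd := hasDerivAt_comp_lineMap hf x y 0
  simpa [hd.deriv, slope_def_field] using
    hφ.deriv_le_slope (mem_univ 0) (mem_univ 1) one_pos hd.differentiableAt

lemma image_one_le_of_hasDerivAt_le_add_mul {φ φ' : ℝ → ℝ} {K : ℝ}
    (hφ : ∀ t, HasDerivAt φ (φ' t) t) (hφ' : ∀ t ∈ Ico (0 : ℝ) 1, φ' t ≤ φ' 0 + K * t) :
    φ 1 ≤ φ 0 + φ' 0 + K / 2 := by
  set B : ℝ → ℝ := fun t => φ 0 + φ' 0 * t + K / 2 * t ^ 2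
  have hB : ∀ t, HasDerivAt B (φ' 0 + K * t) t := fun t => by
    have h := (((hasDerivAt_id' t).const_mul (φ' 0)).const_add (φ 0)).add
      ((hasDerivAt_pow 2 t).const_mul (K / 2))
    exact h.congr_deriv (by norm_num; ring)
  have hφ_cont : Continuous φ := continuous_iff_continuousAt.mpr fun t => (hφ t).continuousAt
  have hB_cont : Continuous B := continuous_iff_continuousAt.mpr fun t => (hB t).continuousAt
  have := image_le_of_deriv_right_le_deriv_boundary hφ_cont.continuousOn
    (fun t _ => (hφ t).hasDerivWithinAt) (by simp [B]) hB_cont.continuousOn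
    (fun t _ => (hB t).hasDerivWithinAt) hφ' (right_mem_Icc.mpr zero_le_one)
  simpa [B] using this

lemma le_add_inner_gradient_add_of_lipschitz_gradient (hf : Differentiable ℝ f) {L : ℝ}
    (hLip : ∀ u v, ‖gradient f u - gradient f v‖ ≤ L * ‖u - v‖) (x y : E) :
    f y ≤ f x + inner ℝ (gradient f x) (y - x) + L / 2 * ‖y - x‖ ^ 2 := by
  set c : ℝ →ᵃ[ℝ] E := AffineMap.lineMap x y
  have key := image_one_le_of_hasDerivAt_le_add_mul (K := L * ‖y - x‖ ^ 2)
    (hasDerivAt_comp_lineMap hf x y) fun t ht => by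
      have hgrad : ‖gradient f (c t) - gradient f x‖ ≤ L * (t * ‖y - x‖) := by
        have hct : c t - x = t • (y - x) := AffineMap.lineMap_vsub_left x y t
        simpa [hct, norm_smul, abs_of_nonneg ht.1] using hLip (c t) x
      set g₀ := inner ℝ (gradient f x) (y - x)
      calc inner ℝ (gradient f (c t)) (y - x)
          = g₀ + inner ℝ (gradient f (c t) - gradient f x) (y - x) := by
            rw [inner_sub_left]; ring
        _ ≤ g₀ + ‖gradient f (c t) - gradient f x‖ * ‖y - x‖ := by
            gcongr; exact real_inner_le_norm _ _
        _ ≤ g₀ + L * (t * ‖y - x‖) * ‖y - x‖ := by gcongr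
        _ = inner ℝ (gradient f (c 0)) (y - x) + L * ‖y - x‖ ^ 2 * t := by simp [c, g₀]; ring
  simpa [c, add_div, mul_div_right_comm] using key

lemma sq_norm_gradient_le_of_lipschitz_gradient (hf : Differentiable ℝ f) {L : ℝ} (hL : 0 < L)
    (hLip : ∀ u v, ‖gradient f u - gradient f v‖ ≤ L * ‖u - v‖) {fmin : ℝ}
    (hmin : ∀ z, fmin ≤ f z) (x : E) :
    ‖gradient f x‖ ^ 2 ≤ 2 * L * (f x - fmin) := by
  have h := le_add_inner_gradient_add_of_lipschitz_gradient hf hLip x (x - L⁻¹ • gradient f x)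
  rw [sub_sub_cancel_left, inner_neg_right, real_inner_smul_right, real_inner_self_eq_norm_sq,
    norm_neg, norm_smul, Real.norm_of_nonneg (inv_nonneg.mpr hL.le)] at h
  have hdecrease : ‖gradient f x‖ ^ 2 / (2 * L) ≤ f x - fmin := by
    have h' : f x + -(L⁻¹ * ‖gradient f x‖ ^ 2) + L / 2 * (L⁻¹ * ‖gradient f x‖) ^ 2
        = f x - ‖gradient f x‖ ^ 2 / (2 * L) := by
      field_simp; ring
    linarith [hmin (x - L⁻¹ • gradient f x)]
  rwa [div_le_iff₀ (by positivity), mul_comm] at hdecrease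

lemma gradient_eq_zero_of_forall_le {p : E} (hmin : ∀ z, f p ≤ f z) : gradient f p = 0 := by
  simp [gradient, IsLocalMin.fderiv_eq_zero (Filter.Eventually.of_forall hmin)]

lemma norm_gradient_step_sub_add_le (hconv : ConvexOn ℝ univ f) (hf : Differentiable ℝ f)
    {L : ℝ} (hL : 0 < L) (hLip : ∀ u v, ‖gradient f u - gradient f v‖ ≤ L * ‖u - v‖)
    {p : E} (hmin : ∀ z, f p ≤ f z) {μ α ν ℓ : ℝ} (hα : 0 < α) (hν : 0 ≤ ν)
    (hstep : α * L * (1 + ν) ^ 2 < 1) (hℓ : 0 ≤ ℓ)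
    (hℓsq : ℓ ^ 2 = 1 - μ * α * (1 - α * L * (1 + ν) ^ 2) + 2 * ν * α * L)
    {x : E} (hQG : μ / 2 * ‖x - p‖ ^ 2 ≤ f x - f p) :
    ‖x - α • gradient f x - p‖ + α * ν * ‖gradient f x‖ ≤ ℓ * ‖x - p‖ := by
  have hGd : ‖gradient f x‖ ≤ L * ‖x - p‖ := by
    simpa [gradient_eq_zero_of_forall_le hmin] using hLip x p
  have hGh := sq_norm_gradient_le_of_lipschitz_gradient hf hL hLip hmin x
  have hip : f x - f p ≤ inner ℝ (gradient f x) (x - p) := by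
    have := hconv.inner_gradient_le_sub hf x p
    rw [← neg_sub x p, inner_neg_right] at this
    linarith
  have hr2 : ‖x - α • gradient f x - p‖ ^ 2
      ≤ ‖x - p‖ ^ 2 - 2 * α * (f x - f p) * (1 - α * L) := by
    calc ‖x - α • gradient f x - p‖ ^ 2
        = ‖x - p‖ ^ 2 - 2 * α * inner ℝ (gradient f x) (x - p)
            + α ^ 2 * ‖gradient f x‖ ^ 2 := by
          rw [sub_right_comm, norm_sub_sq_real, real_inner_smul_right, norm_smul,
            Real.norm_of_nonneg hα.le, real_inner_comm]
          ring
      _ ≤ _ := by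
          nlinarith [mul_le_mul_of_nonneg_left hip hα.le,
            mul_le_mul_of_nonneg_left hGh (sq_nonneg α)]
  exact add_le_mul_of_gradient_step_bounds hL.le hα hν hstep hℓ hℓsq (norm_nonneg _)
    (sub_nonneg.mpr (hmin x)) (norm_nonneg _) (norm_nonneg _) hQG hGh hGd hr2

lemma norm_inexact_gradient_step_sub_le (hconv : ConvexOn ℝ univ f) (hf : Differentiable ℝ f)
    {L : ℝ} (hL : 0 < L) (hLip : ∀ u v, ‖gradient f u - gradient f v‖ ≤ L * ‖u - v‖)
    {p : E} (hmin : ∀ z, f p ≤ f z) {μ α ν ℓ ε : ℝ} (hα : 0 < α) (hν : 0 ≤ ν)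
    (hstep : α * L * (1 + ν) ^ 2 < 1) (hℓ : 0 ≤ ℓ)
    (hℓsq : ℓ ^ 2 = 1 - μ * α * (1 - α * L * (1 + ν) ^ 2) + 2 * ν * α * L)
    {x e : E} (hQG : μ / 2 * ‖x - p‖ ^ 2 ≤ f x - f p) (he : ‖e‖ ≤ ε + ν * ‖gradient f x‖) :
    ‖x - α • (gradient f x + e) - p‖ ≤ ℓ * ‖x - p‖ + α * ε := by
  have hexact := norm_gradient_step_sub_add_le hconv hf hL hLip hmin hα hν hstep hℓ hℓsq hQG
  calc ‖x - α • (gradient f x + e) - p‖ = ‖(x - α • gradient f x - p) - α • e‖ := by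
        congr 1; module
    _ ≤ ‖x - α • gradient f x - p‖ + α * ‖e‖ := by
        rw [← norm_smul_of_nonneg hα.le]; exact norm_sub_le _ _
    _ ≤ ℓ * ‖x - p‖ + α * ε := by nlinarith [mul_le_mul_of_nonneg_left he hα.le]

end SmoothConvex

theorem per_step_tracking_recursion_general {n m : ℕ}
    (A : EuclideanSpace ℝ (Fin n) →L[ℝ] EuclideanSpace ℝ (Fin m)) (hA : A ≠ 0)
    (σmin σmax χ : ℝ)
    (hσmin : σmin = sInf {c : ℝ | ∃ x : EuclideanSpace ℝ (Fin n),
      x ≠ 0 ∧ x ∈ (LinearMap.ker A.toLinearMap)ᗮ ∧ c = ‖A x‖ / ‖x‖})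
    (hσmax : σmax = ‖A‖) (hχ : χ = σmin / σmax)
    (f : EuclideanSpace ℝ (Fin n) → ℝ)
    (hconv : ConvexOn ℝ Set.univ f) (hdiff : Differentiable ℝ f)
    (L : ℝ) (hL : 0 < L)
    (hLip : ∀ u v : EuclideanSpace ℝ (Fin n), ‖gradient f u - gradient f v‖ ≤ L * ‖u - v‖)
    (u u' : EuclideanSpace ℝ (Fin m))
    (S S' : Set (EuclideanSpace ℝ (Fin n)))
    (hS : S = {x | A x = u}) (hS' : S' = {x | A x = u'})
    (hSmin : S = {x | ∀ y : EuclideanSpace ℝ (Fin n), f x ≤ f y})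
    (fstar : ℝ) (hfstar : ∀ x ∈ S, f x = fstar)
    (μ : ℝ)
    (hQG : ∀ x : EuclideanSpace ℝ (Fin n), μ / 2 * Metric.infDist x S ^ 2 ≤ f x - fstar)
    (σv : ℝ)
    (hclose : ∃ xs ∈ S, ∃ ys ∈ S', ‖ys - xs‖ ≤ σv)
    (ε ν α : ℝ) (hε : 0 ≤ ε) (hν : 0 ≤ ν) (hα : 0 < α)
    (hstep : α * L * (1 + ν) ^ 2 < 1)
    (ℓ ζ : ℝ) (hℓpos : 0 < ℓ)
    (hℓsq : ℓ ^ 2 = 1 - μ * α * (1 - α * L * (1 + ν) ^ 2) + 2 * ν * α * L)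
    (hℓlt : ℓ ^ 2 < 1) (hζ : ζ = α * (1 + α * L) / ℓ) :
    ∀ (x e xp : EuclideanSpace ℝ (Fin n)),
      ‖e‖ ≤ ε + ν * ‖gradient f x‖ →
      xp = x - α • (gradient f x + e) →
      Metric.infDist xp S' ≤ ℓ / χ * Metric.infDist x S + (ζ * ε + σv) / χ := by
  intro x e xp he rfl
  obtain ⟨xs, hxs, ys, hys, hσv⟩ := hclose
  obtain ⟨hχ_pos, hχ_le⟩ : 0 < χ ∧ χ ≤ 1 := by
    subst hχ hσmin hσmax
    exact minNonzeroSingularValue_div_opNorm_mem_Ioc hA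
  have hS_closed : IsClosed S := hS ▸ isClosed_singleton.preimage A.continuous
  obtain ⟨p, hpS, hdist⟩ := hS_closed.exists_infDist_eq_dist ⟨xs, hxs⟩ x
  rw [dist_eq_norm] at hdist
  have hpmin : ∀ z, f p ≤ f z := by rw [hSmin] at hpS; exact hpS
  have hstep_p := norm_inexact_gradient_step_sub_le hconv hdiff hL hLip hpmin hα hν hstep
    hℓpos.le hℓsq (by simpa [hdist, hfstar p hpS] using hQG x) he
  have hnext : infDist (x - α • (gradient f x + e)) S' ≤ ‖x - α • (gradient f x + e) - p‖ + σv := by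
    rw [hS] at hpS hxs
    rw [hS'] at hys ⊢
    grw [infDist_setOf_apply_eq_le (hpS.trans hxs.symm) hys, hσv]
  have hαζ : α ≤ ζ := by
    have hℓ_lt_one : ℓ < 1 := by nlinarith
    rw [hζ, le_div_iff₀ hℓpos]
    nlinarith [mul_pos hα hL]
  calc infDist (x - α • (gradient f x + e)) S' ≤ ℓ * infDist x S + (ζ * ε + σv) := by
        nlinarith [mul_le_mul_of_nonneg_right hαζ hε]
    _ ≤ ℓ * infDist x S / χ + (ζ * ε + σv) / χ :=
        add_le_add (le_div_self (mul_nonneg hℓpos.le infDist_nonneg) hχ_pos hχ_le)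
          (le_div_self (by nlinarith [norm_nonneg (ys - xs)]) hχ_pos hχ_le)
    _ = ℓ / χ * infDist x S + (ζ * ε + σv) / χ := by ring

/-- Per-step tracking recursion, deterministic errors:
`dist(x⁺, S') ≤ (ℓ/χ) dist(x, S) + (ζε + σ_v)/χ`. -/
theorem per_step_tracking_recursion {n m : ℕ}
    (A : EuclideanSpace ℝ (Fin n) →L[ℝ] EuclideanSpace ℝ (Fin m)) (hA : A ≠ 0)
    (σmin σmax χ : ℝ)
    (hσmin : σmin = sInf {c : ℝ | ∃ x : EuclideanSpace ℝ (Fin n),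
      x ≠ 0 ∧ x ∈ (LinearMap.ker A.toLinearMap)ᗮ ∧ c = ‖A x‖ / ‖x‖})
    (hσmax : σmax = ‖A‖) (hχ : χ = σmin / σmax)
    (f : EuclideanSpace ℝ (Fin n) → ℝ)
    (hconv : ConvexOn ℝ Set.univ f) (hdiff : Differentiable ℝ f)
    (L : ℝ) (hL : 0 < L)
    (hLip : ∀ u v : EuclideanSpace ℝ (Fin n), ‖gradient f u - gradient f v‖ ≤ L * ‖u - v‖)
    (u u' : EuclideanSpace ℝ (Fin m)) (hu : u ∈ Set.range A) (hu' : u' ∈ Set.range A)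
    (S S' : Set (EuclideanSpace ℝ (Fin n)))
    (hS : S = {x | A x = u}) (hS' : S' = {x | A x = u'})
    (hSmin : S = {x | ∀ y : EuclideanSpace ℝ (Fin n), f x ≤ f y})
    (hgrad0 : ∀ y ∈ S, gradient f y = 0)
    (fstar : ℝ) (hfstar : ∀ x ∈ S, f x = fstar)
    (μ : ℝ) (hμ : 0 < μ)
    (hQG : ∀ x : EuclideanSpace ℝ (Fin n), μ / 2 * Metric.infDist x S ^ 2 ≤ f x - fstar)
    (σv : ℝ)
    (hclose : ∃ xs ∈ S, ∃ ys ∈ S', ‖ys - xs‖ ≤ σv)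
    (ε ν α : ℝ) (hε : 0 ≤ ε) (hν : 0 ≤ ν) (hα : 0 < α)
    (hstep : α * L * (1 + ν) ^ 2 < 1)
    (ℓ ζ : ℝ) (hℓpos : 0 < ℓ)
    (hℓsq : ℓ ^ 2 = 1 - μ * α * (1 - α * L * (1 + ν) ^ 2) + 2 * ν * α * L)
    (hℓlt : ℓ ^ 2 < 1) (hζ : ζ = α * (1 + α * L) / ℓ) :
    ∀ (x e xp : EuclideanSpace ℝ (Fin n)),
      ‖e‖ ≤ ε + ν * ‖gradient f x‖ →
      xp = x - α • (gradient f x + e) →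
      Metric.infDist xp S' ≤ ℓ / χ * Metric.infDist x S + (ζ * ε + σv) / χ :=
  per_step_tracking_recursion_general A hA σmin σmax χ hσmin hσmax hχ f hconv hdiff L hL hLip u u' S
    S' hS hS' hSmin fstar hfstar μ hQG σv hclose ε ν α hε hν hα hstep ℓ ζ hℓpos hℓsq hℓlt hζ
end

section
/- (Proximal online gradient descent as inexact gradient descent.) Let g, h : ℝⁿ → ℝ be differentiable with ∇h being L-Lipschitz, and let α > 0 satisfy αL < 1. Suppose x, x⁺ ∈ ℝⁿ satisfy the proximal fixed-point relation x⁺ = x − α∇g(x) − α∇h(x⁺). Then the equivalent gradient error e := ∇h(x⁺) − ∇h(x) (so that x⁺ = x − α(∇g(x) + ∇h(x) + e)) satisfies ‖e‖ ≤ (αL/(1 − αL)) · ‖∇g(x) + ∇h(x)‖. -/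
/-! The fixed-point relation gives `x⁺ - x = -α (∇g x + ∇h x + e)`, so the Lipschitz bound on `∇h`
yields `‖e‖ ≤ αL ‖∇g x + ∇h x + e‖`; the triangle inequality and `αL < 1` then absorb `‖e‖`. -/

theorem norm_le_div_one_sub_mul_of_norm_le_mul_norm_add {E : Type*} [SeminormedAddCommGroup E]
    {a e : E} {c : ℝ} (hc : c < 1) (h : ‖e‖ ≤ c * ‖a + e‖) :
    ‖e‖ ≤ c / (1 - c) * ‖a‖ := by
  have key : (1 - c) * ‖e‖ ≤ c * ‖a‖ := by
    rcases le_or_gt 0 c with hc₀ | hc₀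
    · nlinarith [mul_le_mul_of_nonneg_left (norm_add_le a e) hc₀]
    · have he : ‖e‖ = 0 :=
        le_antisymm (h.trans (mul_nonpos_of_nonpos_of_nonneg hc₀.le (norm_nonneg _))) (norm_nonneg _)
      have ha : ‖a‖ ≤ ‖a + e‖ := by simpa [he] using norm_sub_le (a + e) e
      nlinarith [mul_le_mul_of_nonpos_left ha hc₀.le]
  rw [div_mul_eq_mul_div, le_div_iff₀ (by linarith)]
  linarith

theorem proximal_ogd_error_bound_general {n : ℕ}
    (g h : EuclideanSpace ℝ (Fin n) → ℝ)
    (L : ℝ)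
    (hLip : ∀ u v : EuclideanSpace ℝ (Fin n),
      ‖gradient h u - gradient h v‖ ≤ L * ‖u - v‖)
    (α : ℝ) (hα : 0 < α) (hαL : α * L < 1)
    (x xp : EuclideanSpace ℝ (Fin n))
    (hprox : xp = x - α • gradient g x - α • gradient h xp)
    (e : EuclideanSpace ℝ (Fin n)) (he : e = gradient h xp - gradient h x) :
    ‖e‖ ≤ α * L / (1 - α * L) * ‖gradient g x + gradient h x‖ := by
  have hstep : xp - x = -(α • (gradient g x + gradient h x + e)) := by
    rw [he]; nth_rewrite 1 [hprox]; module
  refine norm_le_div_one_sub_mul_of_norm_le_mul_norm_add hαL ?_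
  calc ‖e‖ ≤ L * ‖xp - x‖ := he ▸ hLip xp x
    _ = α * L * ‖gradient g x + gradient h x + e‖ := by
      rw [hstep, norm_neg, norm_smul, Real.norm_of_nonneg hα.le]; ring

/-- Proximal online gradient descent as inexact gradient descent:
if `x⁺ = x − α∇g(x) − α∇h(x⁺)` then the equivalent gradient error
`e := ∇h(x⁺) − ∇h(x)` satisfies `‖e‖ ≤ (αL/(1 − αL))‖∇g(x) + ∇h(x)‖`. -/
theorem proximal_ogd_error_bound {n : ℕ}
    (g h : EuclideanSpace ℝ (Fin n) → ℝ)
    (hg : Differentiable ℝ g) (hh : Differentiable ℝ h)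
    (L : ℝ) (hL : 0 < L)
    (hLip : ∀ u v : EuclideanSpace ℝ (Fin n),
      ‖gradient h u - gradient h v‖ ≤ L * ‖u - v‖)
    (α : ℝ) (hα : 0 < α) (hαL : α * L < 1)
    (x xp : EuclideanSpace ℝ (Fin n))
    (hprox : xp = x - α • gradient g x - α • gradient h xp)
    (e : EuclideanSpace ℝ (Fin n)) (he : e = gradient h xp - gradient h x) :
    ‖e‖ ≤ α * L / (1 - α * L) * ‖gradient g x + gradient h x‖ :=
  proximal_ogd_error_bound_general g h L hLip α hα hαL x xp hprox e he
end
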